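/- Let Γ be a connected finite simplicial graph, A_Γ the associated right-angled Artin group, and [v] a maximal equivalence class. Then for every automorphism φ in the pure automorphism group Aut⁰(A_Γ), there exists g ∈ A_Γ such that the automorphism x ↦ g·φ(x)·g⁻¹ maps the subgroup A_{[v]} onto A_{[v]} and maps the subgroup A_{J_[v]} onto A_{J_[v]}. -/

import Mathlib

open SimpleGraph

namespace RaagPaper

variable {V : Type*}

/-- The link of a vertex: the set of vertices adjacent to it. -/
def lk (G : SimpleGraph V) (v : V) : Set V := G.neighborSet v

/-- The (closed) star of a vertex: `st(v) = lk(v) ∪ {v}`. -/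
def st (G : SimpleGraph V) (v : V) : Set V := insert v (G.neighborSet v)

/-- The preorder on vertices: `v ≤ w` iff `lk(v) ⊆ st(w)`. -/
def vle (G : SimpleGraph V) (v w : V) : Prop := lk G v ⊆ st G w

/-- Equivalence of vertices: `v ∼ w` iff `v ≤ w` and `w ≤ v`. -/
def vequiv (G : SimpleGraph V) (v w : V) : Prop := vle G v w ∧ vle G w v

/-- The equivalence class `[v]` of a vertex `v`. -/
def cls (G : SimpleGraph V) (v : V) : Set V := {u | vequiv G u v}

/-- `[v]` is maximal with respect to the partial order induced by `≤`. -/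
def IsMaximalClass (G : SimpleGraph V) (v : V) : Prop := ∀ w, vle G v w → vle G w v

/-- `L_[v] = lk(v) \ [v]`. -/
def Lset (G : SimpleGraph V) (v : V) : Set V := lk G v \ cls G v

/-- `J_[v] = [v] ∪ L_[v]`, the join associated to `[v]`. -/
def Jset (G : SimpleGraph V) (v : V) : Set V := cls G v ∪ Lset G v

/-- `v ∈ V_ab` : any two distinct vertices of `[v]` are adjacent (so `A_[v]` is abelian). -/
def Vab (G : SimpleGraph V) (v : V) : Prop :=
  ∀ x ∈ cls G v, ∀ y ∈ cls G v, x ≠ y → G.Adj x y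

/-- The commutator relations defining the right-angled Artin group of `G`. -/
def raagRels (G : SimpleGraph V) : Set (FreeGroup V) :=
  {r | ∃ u w : V, G.Adj u w ∧
    r = FreeGroup.of u * FreeGroup.of w * (FreeGroup.of u)⁻¹ * (FreeGroup.of w)⁻¹}

/-- The right-angled Artin group `A_Γ`. -/
abbrev Raag (G : SimpleGraph V) : Type _ := PresentedGroup (raagRels G)

/-- The generator of `A_Γ` corresponding to a vertex. -/
def gen (G : SimpleGraph V) (v : V) : Raag G := PresentedGroup.of v

/-- The special subgroup `A_Θ` generated by a set `Θ` of vertices. -/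
def Asub (G : SimpleGraph V) (Θ : Set V) : Subgroup (Raag G) :=
  Subgroup.closure (gen G '' Θ)

/-- The subgroup of inner automorphisms of a group. -/
def Inn (A : Type*) [Group A] : Subgroup (MulAut A) := (MulAut.conj : A →* MulAut A).range

instance (A : Type*) [Group A] : (Inn A).Normal := by
  constructor
  intro n hn φ
  obtain ⟨g, rfl⟩ := hn
  exact ⟨φ g, by ext x; simp [Inn, MulAut.conj]⟩

/-- The outer automorphism group `Out(A) = Aut(A)/Inn(A)`. -/
abbrev OutG (A : Type*) [Group A] : Type _ := MulAut A ⧸ Inn A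

/-- The canonical projection `Aut(A) → Out(A)`. -/
def outMk (A : Type*) [Group A] : MulAut A →* OutG A := QuotientGroup.mk' (Inn A)

/-- `φ` is an inner automorphism. -/
def IsInnerAut {A : Type*} [Group A] (φ : MulAut A) : Prop :=
  ∃ g : A, ∀ x, φ x = g * x * g⁻¹

/-- `φ` is an inversion: it sends one generator to its inverse and fixes the others. -/
def IsInversion (G : SimpleGraph V) (φ : MulAut (Raag G)) : Prop :=
  ∃ v : V, φ (gen G v) = (gen G v)⁻¹ ∧ ∀ x : V, x ≠ v → φ (gen G x) = gen G x

/-- `φ` is a transvection: for `v ≤ w`, `v ≠ w`, it sends `v ↦ vw` and fixes other generators. -/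
def IsTransvection (G : SimpleGraph V) (φ : MulAut (Raag G)) : Prop :=
  ∃ v w : V, v ≠ w ∧ vle G v w ∧ φ (gen G v) = gen G v * gen G w ∧
    ∀ x : V, x ≠ v → φ (gen G x) = gen G x

/-- `φ` is a partial conjugation: for a vertex `u` and a connected component `C` of the
induced subgraph on the complement of `st(u)`, it conjugates generators in `C` by `u` and
fixes the other generators. -/
def IsPartialConj (G : SimpleGraph V) (φ : MulAut (Raag G)) : Prop :=
  ∃ (u : V) (C : Set V),
    (∃ c : (SimpleGraph.induce ((st G u)ᶜ : Set V) G).ConnectedComponent,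
      C = Subtype.val '' c.supp) ∧
    (∀ x ∈ C, φ (gen G x) = gen G u * gen G x * (gen G u)⁻¹) ∧
    (∀ x ∉ C, φ (gen G x) = gen G x)

/-- The pure automorphism group `Aut⁰(A_Γ)`. -/
def Aut0 (G : SimpleGraph V) : Subgroup (MulAut (Raag G)) :=
  Subgroup.closure
    {φ | IsInnerAut φ ∨ IsInversion G φ ∨ IsTransvection G φ ∨ IsPartialConj G φ}

/-- The pure outer automorphism group `Out⁰(A_Γ)`, the image of `Aut⁰(A_Γ)` in `Out(A_Γ)`. -/
def Out0 (G : SimpleGraph V) : Subgroup (OutG (Raag G)) :=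
  (Aut0 G).map (outMk (Raag G))

/-!
The automorphisms preserving both `A_[v]` and `A_{J_[v]}` form a subgroup `S`, and as `Inn` is
normal the claim says `Aut⁰ ≤ Inn ⊔ S`, which can be checked on generators. Inversions preserve
every special subgroup. When `[v]` is maximal, `[v]` and `J_[v]` are closed upwards under `≤`, so
transvections preserve them too. A partial conjugation by `u` on a component `C` of `Γ ∖ st(u)`
preserves `A_Θ` whenever `u ∈ Θ`, and fixes it pointwise when `C` misses `Θ`. In the remaining
case `u ∉ J_[v]` and `C` meets `J_[v]`. Then `J_[v] ∖ st(u)` is connected in `Γ ∖ st(u)` (through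
`v` and a neighbour of `v` outside `st(u)`, which exists by maximality), so `C ⊇ J_[v] ∖ st(u)`
and the partial conjugation agrees with conjugation by `u` on `A_{J_[v]}`.
-/

lemma mem_inn_sup_iff {A : Type*} [Group A] {H : Subgroup (MulAut A)} {ψ : MulAut A} :
    ψ ∈ Inn A ⊔ H ↔ ∃ g : A, MulAut.conj g * ψ ∈ H := by
  have conj_inv_mul (g : A) (η : MulAut A) : MulAut.conj g⁻¹ * (MulAut.conj g * η) = η := by
    rw [← mul_assoc, ← map_mul, inv_mul_cancel, map_one, one_mul]
  rw [Subgroup.mem_sup_of_normal_left]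
  constructor
  · rintro ⟨_, ⟨g, rfl⟩, η, hη, rfl⟩
    exact ⟨g⁻¹, by rwa [conj_inv_mul]⟩
  · rintro ⟨g, hg⟩
    exact ⟨MulAut.conj g⁻¹, ⟨g⁻¹, rfl⟩, _, hg, by rw [conj_inv_mul]⟩

section Graph

variable {G : SimpleGraph V}

lemma vle_refl (a : V) : vle G a a := fun _ hx => Or.inr hx

lemma vle_trans {a b c : V} (hab : vle G a b) (hbc : vle G b c) : vle G a c := by
  intro x hax
  rcases hab hax with rfl | hbx
  · rcases hbc (G.adj_symm hax) with rfl | hca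
    · exact Or.inr hax
    · rcases hab (G.adj_symm hca) with rfl | hxa
      · exact Or.inl rfl
      · exact Or.inr (G.adj_symm hxa)
  · exact hbc hbx

lemma self_mem_cls (v : V) : v ∈ cls G v := ⟨vle_refl v, vle_refl v⟩

lemma cls_subset_Jset (v : V) : cls G v ⊆ Jset G v := Set.subset_union_left

lemma lk_subset_Jset (v : V) : lk G v ⊆ Jset G v := by
  intro x hx
  by_cases h : x ∈ cls G v
  · exact Or.inl h
  · exact Or.inr ⟨hx, h⟩

lemma mem_cls_of_vle {v t w : V} (hv : IsMaximalClass G v) (ht : t ∈ cls G v)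
    (htw : vle G t w) : w ∈ cls G v :=
  have hvw : vle G v w := vle_trans ht.2 htw
  ⟨hv w hvw, hvw⟩

lemma mem_Jset_of_vle {v t w : V} (hv : IsMaximalClass G v) (ht : t ∈ Jset G v)
    (htw : vle G t w) : w ∈ Jset G v := by
  rcases ht with ht | ht
  · exact cls_subset_Jset v (mem_cls_of_vle hv ht htw)
  · rcases htw (G.adj_symm ht.1) with rfl | hwv
    · exact cls_subset_Jset _ (self_mem_cls _)
    · exact lk_subset_Jset v (G.adj_symm hwv)

lemma adj_of_mem_Lset_of_mem_cls {v u x : V} (hu : u ∈ Lset G v) (hx : x ∈ cls G v) :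
    G.Adj u x := by
  rcases hx.2 hu.1 with rfl | hxu
  · exact absurd hx hu.2
  · exact G.adj_symm hxu

lemma notMem_st_of_notMem_Jset {v u : V} (hu : u ∉ Jset G v) : v ∉ st G u := by
  rintro (rfl | huv)
  · exact hu (cls_subset_Jset _ (self_mem_cls _))
  · exact hu (lk_subset_Jset v (G.adj_symm huv))

lemma exists_mem_lk_notMem_st {v u : V} (hv : IsMaximalClass G v) (hu : u ∉ Jset G v) :
    ∃ l ∈ lk G v, l ∉ st G u := by
  by_contra! h
  exact hu (cls_subset_Jset v ⟨hv u h, h⟩)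

lemma connectedComponentMk_eq_of_mem_Jset {v u y : V} (hv : IsMaximalClass G v)
    (hu : u ∉ Jset G v) (hy : y ∈ Jset G v) (hyu : y ∉ st G u) :
    (G.induce (st G u)ᶜ).connectedComponentMk ⟨y, hyu⟩ =
      (G.induce (st G u)ᶜ).connectedComponentMk ⟨v, notMem_st_of_notMem_Jset hu⟩ := by
  refine ConnectedComponent.sound (Reachable.symm ?_)
  by_cases hvy : G.Adj v y
  · exact Adj.reachable hvy
  by_cases hyv : y = v
  · subst hyv; rfl
  rcases hy with hy | hy
  · -- `v` and `y ∼ v` share every neighbour, and maximality gives one outside `st u`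
    obtain ⟨l, hvl, hlu⟩ := exists_mem_lk_notMem_st hv hu
    have hly : G.Adj l y := by
      rcases hy.2 hvl with rfl | hyl
      · exact absurd hvl hvy
      · exact G.adj_symm hyl
    exact (Adj.reachable (G := G.induce (st G u)ᶜ) (u := ⟨v, _⟩) (v := ⟨l, hlu⟩) hvl).trans
      (Adj.reachable (G := G.induce (st G u)ᶜ) (v := ⟨y, hyu⟩) hly)
  · exact absurd hy.1 hvy

end Graph

section SpecialSubgroups

variable {G : SimpleGraph V}

lemma gen_mem_asub {Θ : Set V} {x : V} (hx : x ∈ Θ) : gen G x ∈ Asub G Θ :=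
  Subgroup.subset_closure ⟨x, hx, rfl⟩

lemma gen_mul_comm_of_adj {a b : V} (h : G.Adj a b) : gen G a * gen G b = gen G b * gen G a := by
  have hrel : gen G a * gen G b * (gen G a)⁻¹ * (gen G b)⁻¹ = 1 :=
    (QuotientGroup.eq_one_iff _).2 (Subgroup.subset_normalClosure ⟨a, b, h, rfl⟩)
  rwa [mul_inv_eq_one, mul_inv_eq_iff_eq_mul] at hrel

lemma gen_mul_comm_of_mem_st {u x : V} (hx : x ∈ st G u) :
    gen G u * gen G x = gen G x * gen G u := by
  rcases hx with rfl | hux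
  · rfl
  · exact gen_mul_comm_of_adj hux

lemma map_asub_eq {ψ : MulAut (Raag G)} {Θ : Set V}
    (hmaps : ∀ x ∈ Θ, ψ (gen G x) ∈ Asub G Θ)
    (hsurj : ∀ x ∈ Θ, gen G x ∈ (Asub G Θ).map ψ.toMonoidHom) :
    (Asub G Θ).map ψ.toMonoidHom = Asub G Θ := by
  apply le_antisymm
  · rw [Asub, MonoidHom.map_closure, Subgroup.closure_le]
    rintro _ ⟨_, ⟨x, hx, rfl⟩, rfl⟩
    exact hmaps x hx
  · rw [Asub, Subgroup.closure_le]
    rintro _ ⟨x, hx, rfl⟩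
    exact hsurj x hx

lemma map_asub_eq_of_fix {ψ : MulAut (Raag G)} {Θ : Set V}
    (hfix : ∀ x ∈ Θ, ψ (gen G x) = gen G x) : (Asub G Θ).map ψ.toMonoidHom = Asub G Θ :=
  map_asub_eq (fun x hx => by rw [hfix x hx]; exact gen_mem_asub hx)
    (fun x hx => ⟨gen G x, gen_mem_asub hx, hfix x hx⟩)

lemma map_asub_eq_of_isInversion {ψ : MulAut (Raag G)} (h : IsInversion G ψ) (Θ : Set V) :
    (Asub G Θ).map ψ.toMonoidHom = Asub G Θ := by
  obtain ⟨t, ht, hfix⟩ := h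
  refine map_asub_eq (fun x hx => ?_) (fun x hx => ?_)
  · rcases eq_or_ne x t with rfl | hxt
    · rw [ht]; exact inv_mem (gen_mem_asub hx)
    · rw [hfix x hxt]; exact gen_mem_asub hx
  · rcases eq_or_ne x t with rfl | hxt
    · exact ⟨(gen G x)⁻¹, inv_mem (gen_mem_asub hx), by simp [ht]⟩
    · exact ⟨gen G x, gen_mem_asub hx, hfix x hxt⟩

lemma map_asub_eq_of_transvection {ψ : MulAut (Raag G)} {Θ : Set V} {t w : V} (htw : t ≠ w)
    (ht : ψ (gen G t) = gen G t * gen G w) (hfix : ∀ x, x ≠ t → ψ (gen G x) = gen G x)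
    (hw : t ∈ Θ → w ∈ Θ) : (Asub G Θ).map ψ.toMonoidHom = Asub G Θ := by
  refine map_asub_eq (fun x hx => ?_) (fun x hx => ?_)
  · rcases eq_or_ne x t with rfl | hxt
    · rw [ht]; exact mul_mem (gen_mem_asub hx) (gen_mem_asub (hw hx))
    · rw [hfix x hxt]; exact gen_mem_asub hx
  · rcases eq_or_ne x t with rfl | hxt
    · refine ⟨gen G x * (gen G w)⁻¹,
        mul_mem (gen_mem_asub hx) (inv_mem (gen_mem_asub (hw hx))), ?_⟩
      simp [ht, hfix w htw.symm]
    · exact ⟨gen G x, gen_mem_asub hx, hfix x hxt⟩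

section PartialConjugation

variable {ψ : MulAut (Raag G)} {u : V} {C : Set V}

lemma map_asub_eq_of_partialConj {Θ : Set V} (huC : u ∉ C)
    (hin : ∀ x ∈ C, ψ (gen G x) = gen G u * gen G x * (gen G u)⁻¹)
    (hout : ∀ x ∉ C, ψ (gen G x) = gen G x) (hu : u ∈ Θ) :
    (Asub G Θ).map ψ.toMonoidHom = Asub G Θ := by
  have hgu := gen_mem_asub (G := G) hu
  refine map_asub_eq (fun x hx => ?_) (fun x hx => ?_)
  · by_cases hxC : x ∈ C
    · rw [hin x hxC]; exact mul_mem (mul_mem hgu (gen_mem_asub hx)) (inv_mem hgu)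
    · rw [hout x hxC]; exact gen_mem_asub hx
  · by_cases hxC : x ∈ C
    · refine ⟨(gen G u)⁻¹ * gen G x * gen G u,
        mul_mem (mul_mem (inv_mem hgu) (gen_mem_asub hx)) hgu, ?_⟩
      simp [hin x hxC, hout u huC, mul_assoc]
    · exact ⟨gen G x, gen_mem_asub hx, hout x hxC⟩

lemma conj_inv_mul_partialConj_apply_gen
    (hin : ∀ x ∈ C, ψ (gen G x) = gen G u * gen G x * (gen G u)⁻¹)
    (hout : ∀ x ∉ C, ψ (gen G x) = gen G x) {x : V} (hx : x ∈ C ∨ x ∈ st G u) :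
    (MulAut.conj (gen G u)⁻¹ * ψ) (gen G x) = gen G x := by
  by_cases hxC : x ∈ C
  · simp [hin x hxC, mul_assoc]
  · have hxu : gen G u * gen G x = gen G x * gen G u :=
      gen_mul_comm_of_mem_st (hx.resolve_left hxC)
    simp [hout x hxC, ← hxu, mul_assoc]

end PartialConjugation

end SpecialSubgroups

open scoped Pointwise in
def joinStabilizer (G : SimpleGraph V) (v : V) : Subgroup (MulAut (Raag G)) :=
  MulAction.stabilizer _ (Asub G (cls G v)) ⊓ MulAction.stabilizer _ (Asub G (Jset G v))

section JoinStabilizer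

variable {G : SimpleGraph V} {v : V} {ψ : MulAut (Raag G)}

lemma mem_joinStabilizer_iff : ψ ∈ joinStabilizer G v ↔
    (Asub G (cls G v)).map ψ.toMonoidHom = Asub G (cls G v) ∧
      (Asub G (Jset G v)).map ψ.toMonoidHom = Asub G (Jset G v) :=
  Iff.rfl

lemma mem_joinStabilizer_of_fix (hfix : ∀ x ∈ Jset G v, ψ (gen G x) = gen G x) :
    ψ ∈ joinStabilizer G v :=
  mem_joinStabilizer_iff.2 ⟨map_asub_eq_of_fix fun x hx => hfix x (cls_subset_Jset v hx),
    map_asub_eq_of_fix hfix⟩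

lemma mem_joinStabilizer_of_isInversion (h : IsInversion G ψ) : ψ ∈ joinStabilizer G v :=
  mem_joinStabilizer_iff.2 ⟨map_asub_eq_of_isInversion h _, map_asub_eq_of_isInversion h _⟩

lemma mem_joinStabilizer_of_isTransvection (hv : IsMaximalClass G v)
    (h : IsTransvection G ψ) : ψ ∈ joinStabilizer G v := by
  obtain ⟨t, w, htw, hle, ht, hfix⟩ := h
  exact mem_joinStabilizer_iff.2
    ⟨map_asub_eq_of_transvection htw ht hfix fun h => mem_cls_of_vle hv h hle,
      map_asub_eq_of_transvection htw ht hfix fun h => mem_Jset_of_vle hv h hle⟩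

section PartialConjugation

variable {u : V} {C : Set V}

lemma mem_joinStabilizer_of_partialConj_of_mem_Jset (hC : ∀ x ∈ C, x ∉ st G u)
    (hin : ∀ x ∈ C, ψ (gen G x) = gen G u * gen G x * (gen G u)⁻¹)
    (hout : ∀ x ∉ C, ψ (gen G x) = gen G x) (hu : u ∈ Jset G v) :
    ψ ∈ joinStabilizer G v := by
  have huC : u ∉ C := fun h => hC u h (Or.inl rfl)
  refine mem_joinStabilizer_iff.2 ⟨?_, map_asub_eq_of_partialConj huC hin hout hu⟩
  rcases hu with hu | hu
  · exact map_asub_eq_of_partialConj huC hin hout hu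
  · -- `[v] ⊆ lk u` is disjoint from `C`
    exact map_asub_eq_of_fix fun x hx =>
      hout x fun hxC => hC x hxC (Or.inr (adj_of_mem_Lset_of_mem_cls hu hx))

lemma mem_inn_sup_joinStabilizer_of_partialConj_of_notMem_Jset (hv : IsMaximalClass G v)
    (c : (G.induce (st G u)ᶜ).ConnectedComponent)
    (hin : ∀ x ∈ Subtype.val '' c.supp, ψ (gen G x) = gen G u * gen G x * (gen G u)⁻¹)
    (hout : ∀ x ∉ Subtype.val '' c.supp, ψ (gen G x) = gen G x) (hu : u ∉ Jset G v) :
    ψ ∈ Inn (Raag G) ⊔ joinStabilizer G v := by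
  by_cases hcJ : ∃ x ∈ Subtype.val '' c.supp, x ∈ Jset G v
  · -- `c` is the component of `v`, so it contains every vertex of `J_[v]` outside `st u`
    obtain ⟨_, ⟨x₀, hx₀c, rfl⟩, hx₀J⟩ := hcJ
    refine mem_inn_sup_iff.2 ⟨(gen G u)⁻¹, mem_joinStabilizer_of_fix fun x hx => ?_⟩
    refine conj_inv_mul_partialConj_apply_gen hin hout ?_
    by_cases hxu : x ∈ st G u
    · exact Or.inr hxu
    · refine Or.inl ⟨⟨x, hxu⟩, ?_, rfl⟩
      rw [ConnectedComponent.mem_supp_iff] at hx₀c ⊢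
      rw [← hx₀c, connectedComponentMk_eq_of_mem_Jset hv hu hx hxu,
        connectedComponentMk_eq_of_mem_Jset hv hu hx₀J x₀.2]
  · push Not at hcJ
    exact Subgroup.mem_sup_right
      (mem_joinStabilizer_of_fix fun x hx => hout x fun hxc => hcJ x hxc hx)

lemma mem_inn_sup_joinStabilizer_of_isPartialConj (hv : IsMaximalClass G v)
    (h : IsPartialConj G ψ) : ψ ∈ Inn (Raag G) ⊔ joinStabilizer G v := by
  obtain ⟨u, _, ⟨c, rfl⟩, hin, hout⟩ := h
  by_cases hu : u ∈ Jset G v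
  · refine Subgroup.mem_sup_right (mem_joinStabilizer_of_partialConj_of_mem_Jset ?_ hin hout hu)
    rintro _ ⟨x, -, rfl⟩
    exact x.2
  · exact mem_inn_sup_joinStabilizer_of_partialConj_of_notMem_Jset hv c hin hout hu

end PartialConjugation

lemma aut0_le_inn_sup_joinStabilizer (hv : IsMaximalClass G v) :
    Aut0 G ≤ Inn (Raag G) ⊔ joinStabilizer G v := by
  refine (Subgroup.closure_le _).2 ?_
  rintro ψ (⟨g, hg⟩ | h | h | h)
  · exact Subgroup.mem_sup_left ⟨g, MulEquiv.ext fun x => (hg x).symm⟩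
  · exact Subgroup.mem_sup_right (mem_joinStabilizer_of_isInversion h)
  · exact Subgroup.mem_sup_right (mem_joinStabilizer_of_isTransvection hv h)
  · exact mem_inn_sup_joinStabilizer_of_isPartialConj hv h

end JoinStabilizer

theorem exists_representative_preserving_join_general {V : Type*}
    (G : SimpleGraph V) (v : V) (hv : IsMaximalClass G v)
    (φ : MulAut (Raag G)) (hφ : φ ∈ Aut0 G) :
    ∃ g : Raag G,
      (Asub G (cls G v)).map (MulAut.conj g * φ : MulAut (Raag G)).toMonoidHom
        = Asub G (cls G v) ∧
      (Asub G (Jset G v)).map (MulAut.conj g * φ : MulAut (Raag G)).toMonoidHom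
        = Asub G (Jset G v) := by
  obtain ⟨g, hg⟩ := mem_inn_sup_iff.1 (aut0_le_inn_sup_joinStabilizer hv hφ)
  exact ⟨g, mem_joinStabilizer_iff.1 hg⟩

/-- for a maximal class `[v]`, every pure automorphism `φ ∈ Aut⁰(A_Γ)` becomes,
after composing with a suitable inner automorphism `x ↦ g·φ(x)·g⁻¹`, an automorphism mapping
`A_{[v]}` onto `A_{[v]}` and `A_{J_[v]}` onto `A_{J_[v]}`. -/
theorem exists_representative_preserving_join {V : Type*} [Fintype V] [Nonempty V]
    (G : SimpleGraph V) (hconn : G.Connected) (v : V) (hv : IsMaximalClass G v)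
    (φ : MulAut (Raag G)) (hφ : φ ∈ Aut0 G) :
    ∃ g : Raag G,
      (Asub G (cls G v)).map (MulAut.conj g * φ : MulAut (Raag G)).toMonoidHom
        = Asub G (cls G v) ∧
      (Asub G (Jset G v)).map (MulAut.conj g * φ : MulAut (Raag G)).toMonoidHom
        = Asub G (Jset G v) :=
  exists_representative_preserving_join_general G v hv φ hφ

end RaagPaper
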